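/- Let ψ(c,y) ≡ T^{−1}(f(c,y)) be the source decoder induced by the MAP SC decoder f (for an arbitrary partition into index sets I1, I0, not necessarily ordered). Then Prob(ψ(AX,Y) ≠ X) ≤ (1/2) · Σ_{i∈I0} H(C_i | C_1^{i−1}, Y), where H denotes conditional Shannon entropy measured in bits (logarithm base 2). -/

import Mathlib

open Finset

noncomputable def probOf {Ω : Type*} [Fintype Ω] (p : Ω → ℝ) (E : Set Ω) : ℝ :=
  ∑ ω, E.indicator p ω

noncomputable def condProb {Ω : Type*} [Fintype Ω] (p : Ω → ℝ) (E F : Set Ω) : ℝ :=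
  probOf p (E ∩ F) / probOf p F

noncomputable def entropyOf {Ω Z : Type*} [Fintype Ω] [Fintype Z] (p : Ω → ℝ) (V : Ω → Z) : ℝ :=
  ∑ z, Real.negMulLog (probOf p {ω | V ω = z})

noncomputable def condEntropyOf {Ω U V : Type*} [Fintype Ω] [Fintype U] [Fintype V]
    (p : Ω → ℝ) (Uv : Ω → U) (Vv : Ω → V) : ℝ :=
  entropyOf p (fun ω => (Uv ω, Vv ω)) - entropyOf p Vv

def prefixVec {𝒳 : Type*} {n : ℕ} (c : Fin n → 𝒳) (m : ℕ) (h : m ≤ n) : Fin m → 𝒳 :=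
  fun k => c ⟨k.1, lt_of_lt_of_le k.2 h⟩

def scVecGo {𝒳 : Type*} {n : ℕ} (g : (i : Fin n) → (Fin i.1 → 𝒳) → 𝒳) :
    (k : ℕ) → k < n → 𝒳
  | k, hk => g ⟨k, hk⟩ (fun j => scVecGo g j.1 (j.2.trans hk))
termination_by k _ => k
decreasing_by exact j.2

def scVec {𝒳 : Type*} {n : ℕ} (g : (i : Fin n) → (Fin i.1 → 𝒳) → 𝒳) : Fin n → 𝒳 :=
  fun i => scVecGo g i.1 i.2

def scDec {𝒳 𝒴 : Type*} {n l : ℕ}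
    (I1 : Finset (Fin n)) (hc1 : I1.card = l)
    (f : (i : Fin n) → (Fin i.1 → 𝒳) → (Fin n → 𝒴) → 𝒳)
    (c : Fin l → 𝒳) (y : Fin n → 𝒴) : Fin n → 𝒳 :=
  scVec (fun i pref => if h : i ∈ I1 then c ((I1.orderIsoOfFin hc1).symm ⟨i, h⟩) else f i pref y)

def scDecOrd {𝒳 𝒴 : Type*} {n l : ℕ}
    (f : (i : Fin n) → (Fin i.1 → 𝒳) → (Fin n → 𝒴) → 𝒳)
    (c : Fin l → 𝒳) (y : Fin n → 𝒴) : Fin n → 𝒳 :=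
  scVec (fun i pref => if h : i.1 < l then c ⟨i.1, h⟩ else f i pref y)

/-!
An SC decoder that decodes every coordinate `i ∈ I0` correctly reproduces `T x`, so the
error event is contained in the union over `i ∈ I0` of the events that the MAP guess of `C_i`
from `(C_1^{i-1}, Y)` is wrong. For a distribution `q` with largest mass `q m`, one has
`2 log 2 · (1 - q m) ≤ H(q)` (in nats): if `q m ≤ 1/2` this follows from `H(q) ≥ -log (q m)`,
and otherwise every other atom has mass at most `1/2`, while `negMulLog (q m)` dominates the
chord of `negMulLog` on `[1/2, 1]`. Averaging this over the values of `(C_1^{i-1}, Y)` bounds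
each MAP error probability by half the conditional entropy in bits, and the union bound
finishes the proof.
-/

section ProbOf

variable {Ω : Type*} [Fintype Ω] {p : Ω → ℝ}

lemma probOf_nonneg (hp : 0 ≤ p) (E : Set Ω) : 0 ≤ probOf p E :=
  sum_nonneg fun ω _ => Set.indicator_nonneg (fun ω _ => hp ω) ω

lemma probOf_mono (hp : 0 ≤ p) {E F : Set Ω} (h : E ⊆ F) : probOf p E ≤ probOf p F :=
  sum_le_sum fun ω _ => Set.indicator_le_indicator_of_subset h hp ω

lemma probOf_union_le (hp : 0 ≤ p) (E F : Set Ω) :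
    probOf p (E ∪ F) ≤ probOf p E + probOf p F := by
  unfold probOf
  rw [← sum_add_distrib]
  refine sum_le_sum fun ω _ => ?_
  rw [← Set.indicator_union_add_inter_apply]
  exact le_add_of_nonneg_right (Set.indicator_nonneg (fun ω _ => hp ω) ω)

lemma probOf_biUnion_le (hp : 0 ≤ p) {ι : Type*} (s : Finset ι) (E : ι → Set Ω) :
    probOf p (⋃ i ∈ s, E i) ≤ ∑ i ∈ s, probOf p (E i) := by
  classical
  induction s using Finset.induction with
  | empty => simp [probOf]
  | insert a s ha ih =>
    rw [set_biUnion_insert, sum_insert ha]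
    exact (probOf_union_le hp _ _).trans (add_le_add_right ih _)

lemma probOf_inter_add_diff (E F : Set Ω) :
    probOf p (E ∩ F) + probOf p (F \ E) = probOf p F := by
  unfold probOf
  rw [← sum_add_distrib]
  refine sum_congr rfl fun ω _ => ?_
  by_cases hE : ω ∈ E <;> by_cases hF : ω ∈ F <;> simp [hE, hF]

lemma probOf_eq_sum_inter {Z : Type*} [Fintype Z] (V : Ω → Z) (E : Set Ω) :
    probOf p E = ∑ z, probOf p ({ω | V ω = z} ∩ E) := by
  classical
  unfold probOf
  rw [sum_comm]
  refine sum_congr rfl fun ω _ => ?_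
  simp only [← Set.indicator_indicator, Set.indicator_apply (s := {ω | V ω = _}),
    Set.mem_ofPred_eq, sum_ite_eq, mem_univ, if_true]

end ProbOf

section Entropy

open Real

lemma mul_neg_log_le_negMulLog {x y : ℝ} (hx : 0 ≤ x) (hxy : x ≤ y) :
    x * -log y ≤ negMulLog x := by
  rcases hx.eq_or_lt with rfl | hx
  · simp
  · rw [negMulLog, neg_mul, ← mul_neg]
    exact mul_le_mul_of_nonneg_left (neg_le_neg (log_le_log hx hxy)) hx.le

lemma mul_log_two_le_negMulLog {x : ℝ} (hx : 0 ≤ x) (hx2 : x ≤ 2⁻¹) :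
    x * log 2 ≤ negMulLog x := by
  simpa [log_inv] using mul_neg_log_le_negMulLog hx hx2

lemma one_sub_mul_log_two_le_negMulLog {x : ℝ} (hx2 : 2⁻¹ ≤ x) (hx1 : x ≤ 1) :
    (1 - x) * log 2 ≤ negMulLog x := by
  -- `negMulLog` is concave and its chord from `1/2` to `1` is `(1 - x) * log 2`
  have hchord := concaveOn_negMulLog.2 (Set.mem_Ici.2 (by norm_num : (0 : ℝ) ≤ 2⁻¹))
    (Set.mem_Ici.2 zero_le_one) (by linarith : (0 : ℝ) ≤ 2 - 2 * x)
    (by linarith : (0 : ℝ) ≤ 2 * x - 1) (by ring)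
  have hx : (2 - 2 * x) • (2⁻¹ : ℝ) + (2 * x - 1) • (1 : ℝ) = x := by
    simp only [smul_eq_mul]; ring
  rw [hx, negMulLog_one] at hchord
  simp only [negMulLog, log_inv, smul_eq_mul] at hchord ⊢
  linarith

lemma two_mul_log_two_mul_one_sub_le_neg_log {x : ℝ} (hx : 0 < x) (hx2 : x ≤ 2⁻¹) :
    2 * log 2 * (1 - x) ≤ -log x := by
  have htangent := log_le_sub_one_of_pos (mul_pos two_pos hx)
  rw [log_mul two_ne_zero hx.ne'] at htangent
  have hlog2 : log 2 < 1 := log_two_lt_d9.trans (by norm_num)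
  nlinarith

variable {ι : Type*} [Fintype ι]

lemma neg_log_le_sum_negMulLog (q : ι → ℝ) (hq : 0 ≤ q) (hq1 : ∑ u, q u = 1) {M : ℝ}
    (hle : ∀ u, q u ≤ M) : -log M ≤ ∑ u, negMulLog (q u) :=
  calc -log M = ∑ u, q u * -log M := by rw [← sum_mul, hq1, one_mul]
    _ ≤ ∑ u, negMulLog (q u) := sum_le_sum fun u _ => mul_neg_log_le_negMulLog (hq u) (hle u)

lemma two_mul_log_two_mul_one_sub_le_sum_negMulLog (q : ι → ℝ) (hq : 0 ≤ q)
    (hq1 : ∑ u, q u = 1) (m : ι) (hm : ∀ u, q u ≤ q m) :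
    2 * log 2 * (1 - q m) ≤ ∑ u, negMulLog (q u) := by
  classical
  have hsplit (g : ι → ℝ) : ∑ u, g u = g m + ∑ u ∈ univ.erase m, g u :=
    (add_sum_erase univ g (mem_univ m)).symm
  rcases le_total (q m) 2⁻¹ with hhalf | hhalf
  · have hpos : 0 < q m := by
      refine (hq m).lt_of_ne fun h0 => ?_
      have : ∑ u, q u ≤ 0 := sum_nonpos fun u _ => (hm u).trans h0.ge
      linarith
    exact (two_mul_log_two_mul_one_sub_le_neg_log hpos hhalf).trans
      (neg_log_le_sum_negMulLog q hq hq1 hm)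
  · have hothers : ∀ u ∈ univ.erase m, q u * log 2 ≤ negMulLog (q u) := by
      intro u hu
      have hpair : q u + q m ≤ 1 := by
        rw [← hq1, add_comm, hsplit q]
        exact add_le_add_right (single_le_sum (fun v _ => hq v) hu) _
      exact mul_log_two_le_negMulLog (hq u) (by linarith [hm u])
    have hrest := sum_le_sum hothers
    rw [← sum_mul, show ∑ u ∈ univ.erase m, q u = 1 - q m by linarith [hsplit q]] at hrest
    have hmode := one_sub_mul_log_two_le_negMulLog hhalf (hq1 ▸ single_le_sum (fun v _ => hq v)
      (mem_univ m))
    rw [hsplit fun u => negMulLog (q u)]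
    linarith

lemma two_mul_log_two_mul_sub_le_sum_negMulLog_sub (p : ι → ℝ) (hp : 0 ≤ p) (m : ι)
    (hm : ∀ u, p u ≤ p m) :
    2 * log 2 * (∑ u, p u - p m) ≤ ∑ u, negMulLog (p u) - negMulLog (∑ u, p u) := by
  set P := ∑ u, p u
  rcases (sum_nonneg fun u _ => hp u : 0 ≤ P).eq_or_lt with hP | hP
  · have hzero : p = 0 := (Fintype.sum_eq_zero_iff_of_nonneg hp).1 hP.symm
    simp [P, hzero]
  set q := fun u => p u / P
  have hpq : ∀ u, p u = P * q u := fun u => (mul_div_cancel₀ _ hP.ne').symm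
  have hq1 : ∑ u, q u = 1 := by rw [← sum_div, div_self hP.ne']
  have hkey := two_mul_log_two_mul_one_sub_le_sum_negMulLog q
    (fun u => div_nonneg (hp u) hP.le) hq1 m (fun u => div_le_div_of_nonneg_right (hm u) hP.le)
  calc 2 * log 2 * (P - p m) = P * (2 * log 2 * (1 - q m)) := by rw [hpq m]; ring
    _ ≤ P * ∑ u, negMulLog (q u) := by gcongr
    _ = ∑ u, negMulLog (p u) - negMulLog P := by
      simp only [hpq, negMulLog_mul, sum_add_distrib, ← sum_mul, ← mul_sum, hq1]
      ring

end Entropy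

section MAPError

variable {Ω 𝒳 Z : Type*} [Fintype Ω] [Fintype 𝒳] [Fintype Z] {p : Ω → ℝ}

lemma entropyOf_prod_eq_sum (U : Ω → 𝒳) (V : Ω → Z) :
    entropyOf p (fun ω => (U ω, V ω)) =
      ∑ v, ∑ u, Real.negMulLog (probOf p ({ω | U ω = u} ∩ {ω | V ω = v})) := by
  rw [entropyOf, Fintype.sum_prod_type, sum_comm]
  simp only [Prod.mk.injEq, Set.ofPred_and]

theorem two_mul_log_two_mul_probOf_ne_le_condEntropyOf (hp : 0 ≤ p) (U : Ω → 𝒳) (V : Ω → Z)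
    (d : Z → 𝒳)
    (hMAP : ∀ v, 0 < probOf p {ω | V ω = v} → ∀ a,
      condProb p {ω | U ω = a} {ω | V ω = v} ≤ condProb p {ω | U ω = d v} {ω | V ω = v}) :
    2 * Real.log 2 * probOf p {ω | d (V ω) ≠ U ω} ≤ condEntropyOf p U V := by
  have hjoint (v : Z) (a : 𝒳) : probOf p ({ω | U ω = a} ∩ {ω | V ω = v}) ≤
      probOf p ({ω | U ω = d v} ∩ {ω | V ω = v}) := by
    rcases (probOf_nonneg hp {ω | V ω = v}).eq_or_lt with hv | hv
    · exact (probOf_mono hp Set.inter_subset_right).trans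
        (hv ▸ probOf_nonneg hp _)
    · exact (div_le_div_iff_of_pos_right hv).1 (hMAP v hv a)
  have hmarg (v : Z) : probOf p {ω | V ω = v} =
      ∑ u, probOf p ({ω | U ω = u} ∩ {ω | V ω = v}) :=
    probOf_eq_sum_inter U _
  have herr (v : Z) : probOf p ({ω | V ω = v} ∩ {ω | d (V ω) ≠ U ω}) =
      probOf p {ω | V ω = v} - probOf p ({ω | U ω = d v} ∩ {ω | V ω = v}) := by
    have hset : {ω | V ω = v} ∩ {ω | d (V ω) ≠ U ω} = {ω | V ω = v} \ {ω | U ω = d v} := by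
      ext ω
      simp only [Set.mem_inter_iff, Set.mem_sdiff, Set.mem_ofPred_eq]
      constructor <;> rintro ⟨rfl, h⟩ <;> exact ⟨rfl, Ne.symm h⟩
    rw [hset, ← probOf_inter_add_diff {ω | U ω = d v} {ω | V ω = v}, add_sub_cancel_left]
  rw [condEntropyOf, entropyOf_prod_eq_sum, entropyOf, probOf_eq_sum_inter V, mul_sum,
    ← sum_sub_distrib]
  refine sum_le_sum fun v _ => ?_
  rw [herr, hmarg]
  exact two_mul_log_two_mul_sub_le_sum_negMulLog_sub _ (fun u => probOf_nonneg hp _) (d v)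
    (hjoint v)

end MAPError

section SuccessiveCancellation

variable {𝒳 : Type*} {n : ℕ}

lemma scVec_eq_of_forall (g : (i : Fin n) → (Fin i.1 → 𝒳) → 𝒳) (c : Fin n → 𝒳)
    (h : ∀ i : Fin n, g i (prefixVec c i.1 i.2.le) = c i) : scVec g = c := by
  have hgo : ∀ k (hk : k < n), scVecGo g k hk = c ⟨k, hk⟩ := by
    intro k
    induction k using Nat.strong_induction_on with
    | _ k ih =>
      intro hk
      rw [scVecGo]
      have hpref : (fun j : Fin k => scVecGo g j.1 (j.2.trans hk)) = prefixVec c k hk.le :=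
        funext fun j => ih j.1 j.2 _
      rw [hpref]
      exact h ⟨k, hk⟩
  exact funext fun i => hgo i.1 i.2

lemma scDec_eq_of_forall {𝒴 : Type*} {l : ℕ} (I1 : Finset (Fin n)) (hc1 : I1.card = l)
    (f : (i : Fin n) → (Fin i.1 → 𝒳) → (Fin n → 𝒴) → 𝒳) (a : Fin l → 𝒳) (y : Fin n → 𝒴)
    (c : Fin n → 𝒳) (h1 : ∀ j, c (I1.orderIsoOfFin hc1 j) = a j)
    (h0 : ∀ i ∉ I1, f i (prefixVec c i.1 i.2.le) y = c i) :
    scDec I1 hc1 f a y = c := by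
  refine scVec_eq_of_forall _ c fun i => ?_
  by_cases hi : i ∈ I1
  · rw [dif_pos hi, ← h1, OrderIso.apply_symm_apply]
  · rw [dif_neg hi, h0 i hi]

end SuccessiveCancellation

theorem stmt6_general
    {𝒳 𝒴 : Type*} [Fintype 𝒳] [Fintype 𝒴]
    (n l : ℕ)
    (μ : ((Fin n → 𝒳) × (Fin n → 𝒴)) → ℝ)
    (hμ0 : ∀ ω, 0 ≤ μ ω)
    (A : (Fin n → 𝒳) → (Fin l → 𝒳))
    (I1 I0 : Finset (Fin n))
    (huniv : I1 ∪ I0 = Finset.univ)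
    (hc1 : I1.card = l)
    (T : (Fin n → 𝒳) ≃ (Fin n → 𝒳))
    (hT1 : ∀ x (j : Fin l), T x (I1.orderIsoOfFin hc1 j).1 = A x j)
    (f : (i : Fin n) → (Fin i.1 → 𝒳) → (Fin n → 𝒴) → 𝒳)
    (hMAP : ∀ i ∈ I0, ∀ (cp : Fin i.1 → 𝒳) (y : Fin n → 𝒴),
      0 < probOf μ {ω | prefixVec (T ω.1) i.1 i.2.le = cp ∧ ω.2 = y} →
      ∀ a : 𝒳,
        condProb μ {ω | T ω.1 i = a} {ω | prefixVec (T ω.1) i.1 i.2.le = cp ∧ ω.2 = y} ≤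
          condProb μ {ω | T ω.1 i = f i cp y}
            {ω | prefixVec (T ω.1) i.1 i.2.le = cp ∧ ω.2 = y}) :
    probOf μ {ω | T.symm (scDec I1 hc1 f (A ω.1) ω.2) ≠ ω.1} ≤
      (1 / 2) * ∑ i ∈ I0,
        condEntropyOf μ (fun ω => T ω.1 i)
          (fun ω => (prefixVec (T ω.1) i.1 i.2.le, ω.2)) / Real.log 2 := by
  set err : Fin n → Set ((Fin n → 𝒳) × (Fin n → 𝒴)) :=
    fun i => {ω | f i (prefixVec (T ω.1) i.1 i.2.le) ω.2 ≠ T ω.1 i}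
  have hsub : {ω | T.symm (scDec I1 hc1 f (A ω.1) ω.2) ≠ ω.1} ⊆ ⋃ i ∈ I0, err i := by
    intro ω hω
    by_contra hnot
    simp only [err, Set.mem_iUnion, Set.mem_ofPred_eq, not_exists, not_not] at hnot
    refine hω (T.symm_apply_eq.2 (scDec_eq_of_forall I1 hc1 f _ _ _ (hT1 ω.1) fun i hi => ?_))
    exact hnot i ((mem_union.1 (huniv ▸ mem_univ i)).resolve_left hi)
  have hlog2 : 0 < Real.log 2 := Real.log_pos one_lt_two
  have herr (i : Fin n) (hi : i ∈ I0) : probOf μ (err i) ≤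
      condEntropyOf μ (fun ω => T ω.1 i) (fun ω => (prefixVec (T ω.1) i.1 i.2.le, ω.2)) /
        (2 * Real.log 2) := by
    rw [le_div_iff₀ (by positivity), mul_comm]
    refine two_mul_log_two_mul_probOf_ne_le_condEntropyOf hμ0 (fun ω => T ω.1 i)
      (fun ω => (prefixVec (T ω.1) i.1 i.2.le, ω.2)) (fun v => f i v.1 v.2) ?_
    rintro ⟨cp, y⟩
    simpa only [Prod.mk.injEq] using hMAP i hi cp y
  calc probOf μ {ω | T.symm (scDec I1 hc1 f (A ω.1) ω.2) ≠ ω.1}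
      ≤ ∑ i ∈ I0, probOf μ (err i) := (probOf_mono hμ0 hsub).trans (probOf_biUnion_le hμ0 _ _)
    _ ≤ _ := sum_le_sum herr
    _ = _ := by rw [mul_sum]; exact sum_congr rfl fun i _ => by field_simp

/-- for an arbitrary partition `(I1, I0)` and the MAP SC decoder `f`, the
induced source decoder `ψ = T⁻¹ ∘ f` satisfies
`Prob(ψ(AX,Y) ≠ X) ≤ (1/2) · Σ_{i ∈ I0} H(C_i | C_1^{i-1}, Y)` with entropy in bits. -/
theorem stmt6
    {𝒳 𝒴 : Type*} [Fintype 𝒳] [Fintype 𝒴]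
    (hcard : 2 ≤ Fintype.card 𝒳)
    (n l : ℕ) (hl : l ≤ n)
    (μ : ((Fin n → 𝒳) × (Fin n → 𝒴)) → ℝ)
    (hμ0 : ∀ ω, 0 ≤ μ ω) (hμ1 : ∑ ω, μ ω = 1)
    (A : (Fin n → 𝒳) → (Fin l → 𝒳)) (B : (Fin n → 𝒳) → (Fin (n - l) → 𝒳))
    (I1 I0 : Finset (Fin n))
    (hdisj : Disjoint I1 I0) (huniv : I1 ∪ I0 = Finset.univ)
    (hc1 : I1.card = l) (hc0 : I0.card = n - l)
    (T : (Fin n → 𝒳) ≃ (Fin n → 𝒳))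
    (hT1 : ∀ x (j : Fin l), T x (I1.orderIsoOfFin hc1 j).1 = A x j)
    (hT0 : ∀ x (j : Fin (n - l)), T x (I0.orderIsoOfFin hc0 j).1 = B x j)
    (f : (i : Fin n) → (Fin i.1 → 𝒳) → (Fin n → 𝒴) → 𝒳)
    (hMAP : ∀ i ∈ I0, ∀ (cp : Fin i.1 → 𝒳) (y : Fin n → 𝒴),
      0 < probOf μ {ω | prefixVec (T ω.1) i.1 i.2.le = cp ∧ ω.2 = y} →
      ∀ a : 𝒳,
        condProb μ {ω | T ω.1 i = a} {ω | prefixVec (T ω.1) i.1 i.2.le = cp ∧ ω.2 = y} ≤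
          condProb μ {ω | T ω.1 i = f i cp y}
            {ω | prefixVec (T ω.1) i.1 i.2.le = cp ∧ ω.2 = y}) :
    probOf μ {ω | T.symm (scDec I1 hc1 f (A ω.1) ω.2) ≠ ω.1} ≤
      (1 / 2) * ∑ i ∈ I0,
        condEntropyOf μ (fun ω => T ω.1 i)
          (fun ω => (prefixVec (T ω.1) i.1 i.2.le, ω.2)) / Real.log 2 :=
  stmt6_general n l μ hμ0 A I1 I0 huniv hc1 T hT1 f hMAP
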